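/- arXiv:2602.19106 — 2 statements merged into one kernel-verified Lean document; each statement's English description precedes it below -/
import Mathlib

section
/- Let ⟨(F,E), 𝒰⟩ be a soft uniform space with induced soft topology τ_𝒰. If 𝒰 is separated (i.e., for each e ∈ E, the intersection of all U(e) over U ∈ 𝒰 equals the diagonal of F(e)), then τ_𝒰 is soft T₁: for every pair of soft elements x, y of F with x(e₀) ≠ y(e₀) for some e₀, there exists a τ_𝒰-open soft set O with x ∈ₛ O and y ∉ₛ O. -/
variable {X Y Z E : Type*}

/-- `x` is a soft element of the soft set `F : E → Set X`. -/
def SoftElem (F : E → Set X) (x : E → X) : Prop := ∀ e, x e ∈ F e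

/-- `R` is a soft relation on the soft set `F`. -/
def IsSoftRel (F : E → Set X) (R : E → Set (X × X)) : Prop :=
  ∀ e, R e ⊆ (F e) ×ˢ (F e)

/-- Diagonal soft relation. -/
def srDiag (F : E → Set X) : E → Set (X × X) :=
  fun e => {p | p.1 = p.2 ∧ p.1 ∈ F e}

/-- Parameterwise inverse of a soft relation. -/
def srInv (R : E → Set (X × X)) : E → Set (X × X) :=
  fun e => {p | (p.2, p.1) ∈ R e}

/-- Parameterwise composition `R ∘ S`: `(x,z)` with `(x,y) ∈ S e` and `(y,z) ∈ R e`. -/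
def srComp (R S : E → Set (X × X)) : E → Set (X × X) :=
  fun e => {p | ∃ y, (p.1, y) ∈ S e ∧ (y, p.2) ∈ R e}

/-- Parameterwise containment of soft relations. -/
def srLE (R S : E → Set (X × X)) : Prop := ∀ e, R e ⊆ S e

/-- Soft uniformity axioms (U1)–(U5). -/
structure SoftUniformity (F : E → Set X) (𝒰 : Set (E → Set (X × X))) : Prop where
  nonempty : 𝒰.Nonempty
  isRel : ∀ U ∈ 𝒰, IsSoftRel F U
  diag : ∀ U ∈ 𝒰, srLE (srDiag F) U
  inter : ∀ U ∈ 𝒰, ∀ V ∈ 𝒰, (fun e => U e ∩ V e) ∈ 𝒰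
  inv : ∀ U ∈ 𝒰, srInv U ∈ 𝒰
  sqrt : ∀ U ∈ 𝒰, ∃ V ∈ 𝒰, srLE (srComp V V) U
  upward : ∀ U ∈ 𝒰, ∀ W, IsSoftRel F W → srLE U W → W ∈ 𝒰

/-- The soft entourage neighbourhood `U[x]`. -/
def softBall (F : E → Set X) (U : E → Set (X × X)) (x : E → X) : E → Set X :=
  fun e => {y ∈ F e | (x e, y) ∈ U e}

/-- `O` is open in the soft topology induced by `𝒰`. -/
def SoftOpen (F : E → Set X) (𝒰 : Set (E → Set (X × X))) (O : E → Set X) : Prop :=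
  (∀ e, O e ⊆ F e) ∧
  ∀ x : E → X, (∀ e, x e ∈ O e) → ∃ U ∈ 𝒰, ∀ e, softBall F U x e ⊆ O e

theorem separated_implies_softT1 (F : E → Set X) (𝒰 : Set (E → Set (X × X)))
    (h𝒰 : SoftUniformity F 𝒰)
    (hsep : ∀ e, {p : X × X | ∀ U ∈ 𝒰, p ∈ U e} = srDiag F e) :
    ∀ x y : E → X, SoftElem F x → SoftElem F y → (∃ e₀, x e₀ ≠ y e₀) →
      ∃ O : E → Set X, SoftOpen F 𝒰 O ∧ (∀ e, x e ∈ O e) ∧ ∃ e, y e ∉ O e := by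
  rintro x y hx hy ⟨e₀, hxy⟩
  refine ⟨fun e => {z ∈ F e | e = e₀ → z ≠ y e₀}, ⟨fun e => Set.sep_subset _ _, ?_⟩,
    fun e => ⟨hx e, fun he => by subst he; exact hxy⟩, e₀, fun h => h.2 rfl rfl⟩
  intro z hz
  have hne : z e₀ ≠ y e₀ := (hz e₀).2 rfl
  have : (z e₀, y e₀) ∉ {p : X × X | ∀ U ∈ 𝒰, p ∈ U e₀} := by
    rw [hsep e₀]; exact fun h => hne h.1
  simp only [Set.mem_setOf_eq, not_forall] at this
  obtain ⟨U, hU, hUp⟩ := this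
  refine ⟨U, hU, fun e w hw => ⟨hw.1, fun he hwy => ?_⟩⟩
  subst he; subst hwy
  exact hUp hw.2
end

section
/- Let ⟨(F,E), 𝒰⟩ be a soft uniform space with induced soft topology τ_𝒰. If τ_𝒰 is soft T₁, then 𝒰 is separated: whenever soft elements x, y of F satisfy (x(e), y(e)) ∈ U(e) for all U ∈ 𝒰 and all e ∈ E, then x = y. -/
variable {X Y Z E : Type*}

theorem softT1_implies_separated (F : E → Set X) (𝒰 : Set (E → Set (X × X)))
    (h𝒰 : SoftUniformity F 𝒰)
    (hT1 : ∀ x y : E → X, SoftElem F x → SoftElem F y → (∃ e₀, x e₀ ≠ y e₀) →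
      ∃ O : E → Set X, SoftOpen F 𝒰 O ∧ (∀ e, x e ∈ O e) ∧ ∃ e, y e ∉ O e) :
    ∀ x y : E → X, SoftElem F x → SoftElem F y →
      (∀ U ∈ 𝒰, ∀ e, (x e, y e) ∈ U e) → x = y := by
  intro x y hx hy hU
  by_contra hne
  obtain ⟨O, hO, hxO, e, hyO⟩ := hT1 x y hx hy (by
    by_contra h
    push_neg at h
    exact hne (funext h))
  obtain ⟨U, hUmem, hball⟩ := hO.2 x hxO
  exact hyO (hball e ⟨hy e, hU U hUmem e⟩)
end
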